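/- arXiv:1708.09243 — 4 statements merged into one kernel-verified Lean document; each statement's English description precedes it below -/
import Mathlib

section
/- Let H be a fixed graph with at least one edge and let a, b > 0 with a + b = 1 and b > a(|H|−1); set ε := b − a(|H|−1). There is a constant c = c(H, ε) > 0 such that the following holds. For n ∈ ℕ divisible by |H|, let G_n be the complete bipartite graph on vertex set [n] with parts of sizes an and bn. If p ≤ c·(bn)^{-1/d*(H)}, then asymptotically almost surely G_n ∪ G_{n,p} does not contain a perfect H-tiling. -/
open MeasureTheory Filter

noncomputable def bernoulliMeasure (p : ℝ) : Measure Bool :=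
  (PMF.bernoulli (min (Real.toNNReal p) 1) (min_le_right _ _)).toMeasure

noncomputable def erMeasure (n : ℕ) (p : ℝ) : Measure (Sym2 (Fin n) → Bool) :=
  Measure.pi fun _ => bernoulliMeasure p

/-- The random graph on `Fin n` determined by the edge-indicator function `ω`. -/
def graphOfFn {n : ℕ} (ω : Sym2 (Fin n) → Bool) : SimpleGraph (Fin n) where
  Adj u v := u ≠ v ∧ ω s(u, v) = true
  symm := ⟨fun u v h => ⟨h.1.symm, by rw [Sym2.eq_swap]; exact h.2⟩⟩
  loopless := ⟨fun u h => h.1 rfl⟩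

/-- `f` is a copy of `H` in `G` (not necessarily induced). -/
def IsCopyEmb {α β : Type*} (H : SimpleGraph α) (G : SimpleGraph β) (f : α ↪ β) : Prop :=
  ∀ ⦃u v : α⦄, H.Adj u v → G.Adj (f u) (f v)

/-- `F` is an `H`-tiling in `G`: vertex-disjoint copies of `H` in `G`. -/
def IsHTiling {α β : Type*} (H : SimpleGraph α) (G : SimpleGraph β) (F : Set (α ↪ β)) : Prop :=
  (∀ f ∈ F, IsCopyEmb H G f) ∧
    ∀ f ∈ F, ∀ g ∈ F, f ≠ g → Disjoint (Set.range (⇑f)) (Set.range (⇑g))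

/-- The set of vertices covered by the tiling `F`. -/
def tilingCover {α β : Type*} (F : Set (α ↪ β)) : Set β := ⋃ f ∈ F, Set.range (⇑f)

/-- `G` contains a perfect `H`-tiling. -/
def HasPerfectHTiling {α β : Type*} (H : SimpleGraph α) (G : SimpleGraph β) : Prop :=
  ∃ F : Set (α ↪ β), IsHTiling H G F ∧ tilingCover F = Set.univ

/-- `d(H') = e(H')/(|H'| - 1)` for a subgraph `H'`. -/
noncomputable def dRatio {V : Type*} {H : SimpleGraph V} (H' : H.Subgraph) : ℝ :=
  (H'.edgeSet.ncard : ℝ) / ((H'.verts.ncard : ℝ) - 1)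

/-- `d*(H) = max{d(H') : H' ⊆ H, |H'| ≥ 2}`. -/
noncomputable def dStar {V : Type*} (H : SimpleGraph V) : ℝ :=
  sSup {x : ℝ | ∃ H' : H.Subgraph, 2 ≤ H'.verts.ncard ∧ x = dRatio H'}

noncomputable def pairDensity {V : Type*} (G : SimpleGraph V) (A B : Set V) : ℝ :=
  (({p : V × V | p.1 ∈ A ∧ p.2 ∈ B ∧ G.Adj p.1 p.2}).ncard : ℝ) /
    ((A.ncard : ℝ) * (B.ncard : ℝ))

/-- `(A, B)` is an `ε`-regular pair in `G`. -/
def IsRegularPair {V : Type*} (G : SimpleGraph V) (A B : Set V) (ε : ℝ) : Prop :=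
  ∀ X ⊆ A, ∀ Y ⊆ B, ε * A.ncard ≤ (X.ncard : ℝ) → ε * B.ncard ≤ (Y.ncard : ℝ) →
    |pairDensity G A B - pairDensity G X Y| < ε

/-- `(A, B)` is an `(ε, d)`-super-regular pair in `G`. -/
def IsSuperRegularPair {V : Type*} (G : SimpleGraph V) (A B : Set V) (ε d : ℝ) : Prop :=
  (∀ X ⊆ A, ∀ Y ⊆ B, ε * A.ncard ≤ (X.ncard : ℝ) → ε * B.ncard ≤ (Y.ncard : ℝ) →
      d < pairDensity G X Y) ∧
    (∀ a ∈ A, d * B.ncard < ((G.neighborSet a ∩ B).ncard : ℝ)) ∧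
    (∀ b ∈ B, d * A.ncard < ((G.neighborSet b ∩ A).ncard : ℝ))

/-!
Let `H' ⊆ H` attain `d*(H)`, with `v'` vertices and `e' = d*(H) (v' - 1)` edges. Every edge of the
complete bipartite graph meets the small part `A`, and each vertex of `A` lies in a single tile, so
of the `n / |H|` tiles of a perfect tiling at least `k = n / |H| - |A| ≥ ε n / |H|` avoid `A`: they
are vertex-disjoint copies of `H`, hence of `H'`, in `G_{n,p}`. Listed by increasing image of a
fixed vertex of `H'`, there are at most `2^n n^((v' - 1) k)` such families of copies of `H'`, each
present with probability `p^(k e') ≤ (c^e' (b n)^(-(v' - 1)))^k`. For `c` small in terms of `b`,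
`|H|` and `ε` the first moment is at most `2^(-n)`.
-/

open Function

lemma exists_subgraph_dStar_eq {V : Type*} [Finite V] {H : SimpleGraph V}
    (hH : H.edgeSet.Nonempty) :
    ∃ H' : H.Subgraph, H'.verts.Nonempty ∧ H'.edgeSet.ncard ≠ 0 ∧
      dStar H = H'.edgeSet.ncard / ((H'.verts.ncard - 1 : ℕ) : ℝ) := by
  set S := {x : ℝ | ∃ H' : H.Subgraph, 2 ≤ H'.verts.ncard ∧ x = dRatio H'}
  have hfin : S.Finite :=
    (Set.finite_range dRatio).subset fun _ ⟨H', _, hx⟩ => ⟨H', hx.symm⟩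
  have hone : (1 : ℝ) ∈ S := by
    obtain ⟨e, he⟩ := hH
    induction e with
    | _ u v =>
      rw [SimpleGraph.mem_edgeSet] at he
      refine ⟨H.subgraphOfAdj he, ?_, ?_⟩ <;>
        simp [dRatio, Set.ncard_pair he.ne]
      norm_num
  obtain ⟨H', hv, hH'⟩ := Set.Nonempty.csSup_mem ⟨1, hone⟩ hfin
  have hdStar : dStar H = H'.edgeSet.ncard / ((H'.verts.ncard - 1 : ℕ) : ℝ) := by
    rw [dStar, hH', dRatio, Nat.cast_sub (by omega), Nat.cast_one]
  have hd1 : 1 ≤ dStar H := le_csSup hfin.bddAbove hone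
  refine ⟨H', Set.nonempty_of_ncard_ne_zero (by omega), fun he => ?_, hdStar⟩
  norm_num [hdStar, he] at hd1

lemma SimpleGraph.Subgraph.ncard_edgeSet_coe {V : Type*} {G : SimpleGraph V} (G' : G.Subgraph) :
    G'.coe.edgeSet.ncard = G'.edgeSet.ncard := by
  rw [← G'.image_coe_edgeSet_coe, Set.ncard_image_of_injective _
    (Sym2.map.injective Subtype.val_injective)]

def HasDisjointCopies {W V : Type*} (J : SimpleGraph W) (G : SimpleGraph V) (k : ℕ) : Prop :=
  ∃ T : Fin k → W ↪ V,
    Pairwise (Disjoint on fun i => Set.range (T i)) ∧ ∀ i, IsCopyEmb J G (T i)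

namespace HasDisjointCopies

variable {W V : Type*} {J : SimpleGraph W} {G : SimpleGraph V} {k : ℕ}

lemma coe_subgraph (hJ : HasDisjointCopies J G k) (J' : J.Subgraph) :
    HasDisjointCopies J'.coe G k := by
  obtain ⟨T, hdisj, hcopy⟩ := hJ
  refine ⟨fun i => (Embedding.subtype _).trans (T i), fun i j hij => (hdisj hij).mono ?_ ?_,
    fun i u v huv => hcopy i (J'.adj_sub huv)⟩ <;>
  exact Set.range_comp_subset_range Subtype.val _

lemma exists_strictMono [LinearOrder V] (hJ : HasDisjointCopies J G k) (w : W) :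
    ∃ T : Fin k → W ↪ V, StrictMono (fun i => T i w) ∧
      Pairwise (Disjoint on fun i => Set.range (T i)) ∧ ∀ i, IsCopyEmb J G (T i) := by
  obtain ⟨T, hdisj, hcopy⟩ := hJ
  have hinj : Injective fun i => T i w := fun i j hij => by
    by_contra hne
    exact Set.disjoint_left.mp (hdisj hne) ⟨w, rfl⟩ ⟨w, hij.symm⟩
  let σ := Tuple.sort fun i => T i w
  exact ⟨T ∘ σ, (Tuple.monotone_sort _).strictMono_of_injective (hinj.comp σ.injective),
    fun i j hij => hdisj (σ.injective.ne hij), fun i => hcopy (σ i)⟩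

end HasDisjointCopies

lemma bijective_apply_of_tilingCover_eq_univ {α V : Type*} {F : Set (α ↪ V)}
    (hdisj : ∀ f ∈ F, ∀ g ∈ F, f ≠ g → Disjoint (Set.range ⇑f) (Set.range ⇑g))
    (hcover : tilingCover F = Set.univ) :
    Bijective fun fx : F × α => fx.1.1 fx.2 := by
  refine ⟨fun ⟨f, x⟩ ⟨g, y⟩ hfg => ?_, fun v => ?_⟩
  · obtain rfl : f = g := by
      by_contra hne
      exact Set.disjoint_left.mp (hdisj f f.2 g g.2 (Subtype.coe_injective.ne hne))
        ⟨x, rfl⟩ ⟨y, hfg.symm⟩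
    rw [f.1.injective (a₁ := x) (a₂ := y) hfg]
  · have hv : v ∈ tilingCover F := hcover ▸ Set.mem_univ v
    obtain ⟨f, hf, x, rfl⟩ := Set.mem_iUnion₂.mp hv
    exact ⟨(⟨f, hf⟩, x), rfl⟩

lemma HasPerfectHTiling.hasDisjointCopies_of_sup {α V : Type*} [Fintype α] [Nonempty α]
    [Finite V] {H : SimpleGraph α} {G : SimpleGraph V} {A : Set V} {m : ℕ}
    (hV : Nat.card V = Fintype.card α * m)
    (hT : HasPerfectHTiling H (SimpleGraph.fromRel (fun u v => u ∈ A ∧ v ∉ A) ⊔ G)) :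
    HasDisjointCopies H G (m - A.ncard) := by
  obtain ⟨F, ⟨hcopy, hdisj⟩, hcover⟩ := hT
  have hbij := bijective_apply_of_tilingCover_eq_univ hdisj hcover
  have hF : Nat.card F = m := by
    have := Nat.card_eq_of_bijective _ hbij
    rw [Nat.card_prod, hV, Nat.card_eq_fintype_card (α := α), mul_comm] at this
    exact Nat.eq_of_mul_eq_mul_left Fintype.card_pos this
  let tile : V → F := fun v => ((Equiv.ofBijective _ hbij).symm v).1
  have hfree : ∀ f ∈ (tile '' A)ᶜ, ∀ x, f.1 x ∉ A := fun f hf x hx =>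
    hf ⟨_, hx, congrArg Prod.fst ((Equiv.ofBijective _ hbij).symm_apply_apply (f, x))⟩
  have hk : m - A.ncard ≤ Nat.card ↥(tile '' A)ᶜ := by
    have := Set.ncard_add_ncard_compl (tile '' A)
    have := Set.ncard_image_le (f := tile) (s := A)
    rw [Nat.card_coe_set_eq]
    omega
  let T := (Fin.castLEEmb hk).trans (Finite.equivFin _).symm.toEmbedding
  refine ⟨fun i => (T i).1.1, fun i j hij => hdisj _ (T i).1.2 _ (T j).1.2
    fun h => hij (T.injective (Subtype.ext (Subtype.ext h))), fun i u v huv => ?_⟩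
  obtain huv | huv := hcopy _ (T i).1.2 huv
  · obtain ⟨hu, -⟩ | ⟨hv, -⟩ := huv.2
    · exact absurd hu (hfree _ (T i).2 u)
    · exact absurd hv (hfree _ (T i).2 v)
  · exact huv

instance (p : ℝ) : IsProbabilityMeasure (bernoulliMeasure p) :=
  PMF.toMeasure.isProbabilityMeasure _

lemma bernoulliMeasure_singleton_true (p : ℝ) :
    bernoulliMeasure p {true} = min (ENNReal.ofReal p) 1 := by
  rw [bernoulliMeasure, PMF.toMeasure_apply_singleton _ _ (measurableSet_singleton _)]
  rfl

lemma erMeasure_forall_mem_eq_true (n : ℕ) (p : ℝ) (S : Finset (Sym2 (Fin n))) :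
    erMeasure n p {ω | ∀ e ∈ S, ω e = true} = min (ENNReal.ofReal p) 1 ^ S.card := by
  classical
  have hS : {ω : Sym2 (Fin n) → Bool | ∀ e ∈ S, ω e = true} =
      Set.univ.pi fun e => if e ∈ S then {true} else Set.univ := by
    ext ω
    simp only [Set.mem_ofPred_eq, Set.mem_univ_pi]
    refine forall_congr' fun e => ?_
    split_ifs <;> simp [*]
  rw [hS, erMeasure, Measure.pi_pi]
  simp_rw [apply_ite (bernoulliMeasure p), measure_univ, bernoulliMeasure_singleton_true]
  rw [Finset.prod_ite_mem, Finset.univ_inter, Finset.prod_const]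

lemma erMeasure_forall_isCopyEmb_le {W : Type*} [Finite W] (J : SimpleGraph W) {n k : ℕ}
    (p : ℝ) (T : Fin k → W ↪ Fin n) (hT : Pairwise (Disjoint on fun i => Set.range (T i))) :
    erMeasure n p {ω | ∀ i, IsCopyEmb J (graphOfFn ω) (T i)} ≤
      ENNReal.ofReal p ^ (k * J.edgeSet.ncard) := by
  classical
  have := Fintype.ofFinite W
  let S := Finset.univ.image fun ie : Fin k × J.edgeSet => Sym2.map (T ie.1) ie.2
  have hS : S.card = k * J.edgeSet.ncard := by
    rw [Finset.card_image_of_injective, Finset.card_univ, Fintype.card_prod, Fintype.card_fin,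
      ← Nat.card_eq_fintype_card, Nat.card_coe_set_eq]
    rintro ⟨i, e, he⟩ ⟨j, e', he'⟩ hee'
    simp only at hee'
    obtain rfl : i = j := by
      by_contra hij
      obtain ⟨u, hu⟩ : ∃ u, u ∈ e := ⟨_, Sym2.out_fst_mem e⟩
      obtain ⟨u', -, hu'⟩ := Sym2.mem_map.mp (hee' ▸ Sym2.mem_map.mpr ⟨u, hu, rfl⟩ :
        T i u ∈ Sym2.map (T j) e')
      exact Set.disjoint_left.mp (hT hij) ⟨u, rfl⟩ ⟨u', hu'⟩
    exact Prod.ext rfl (Subtype.ext (Sym2.map.injective (T i).injective hee'))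
  calc _ ≤ erMeasure n p {ω | ∀ e ∈ S, ω e = true} := by
        refine measure_mono fun ω hω _ hS => ?_
        obtain ⟨⟨i, e, he⟩, -, rfl⟩ := Finset.mem_image.mp hS
        induction e with
        | _ u v => exact (hω i he).2
    _ = min (ENNReal.ofReal p) 1 ^ S.card := erMeasure_forall_mem_eq_true n p S
    _ ≤ _ := by rw [hS]; gcongr; exact min_le_left _ _

lemma ncard_strictMono_le {W : Type*} [Finite W] (w : W) (n k : ℕ) :
    {T : Fin k → W ↪ Fin n | StrictMono fun i => T i w}.ncard ≤
      2 ^ n * n ^ ((Nat.card W - 1) * k) := by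
  classical
  have := Fintype.ofFinite W
  -- a tuple is determined by the set of its strictly increasing `w`-coordinates and the rest
  let Θ : (Fin k → W ↪ Fin n) → Finset (Fin n) × (Fin k → {x // x ≠ w} → Fin n) :=
    fun T => (Finset.univ.image fun i => T i w, fun i x => T i x)
  have hΘ : Set.InjOn Θ {T | StrictMono fun i => T i w} := by
    intro T hT T' hT' hTT'
    simp only [Θ, Prod.mk.injEq] at hTT'
    have hw : (fun i => T i w) = fun i => T' i w := by
      rw [← hT.range_inj hT']
      simpa using congrArg (fun s : Finset (Fin n) => (s : Set (Fin n))) hTT'.1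
    funext i
    refine DFunLike.ext _ _ fun x => ?_
    by_cases hx : x = w
    · subst hx; exact congrFun hw i
    · exact congrFun (congrFun hTT'.2 i) ⟨x, hx⟩
  calc _ ≤ (Set.univ : Set (Finset (Fin n) × (Fin k → {x // x ≠ w} → Fin n))).ncard :=
        Set.ncard_le_ncard_of_injOn Θ (fun _ _ => Set.mem_univ _) hΘ
    _ = _ := by
      rw [Set.ncard_univ, Nat.card_eq_fintype_card]
      simp [Fintype.card_subtype_compl, Nat.card_eq_fintype_card, pow_mul]

lemma erMeasure_hasDisjointCopies_le {W : Type*} [Finite W] (J : SimpleGraph W) (w : W)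
    (n k : ℕ) (p : ℝ) :
    erMeasure n p {ω | HasDisjointCopies J (graphOfFn ω) k} ≤
      2 ^ n * n ^ ((Nat.card W - 1) * k) * ENNReal.ofReal p ^ (k * J.edgeSet.ncard) := by
  -- ordering the copies by the image of `w` avoids a factor `k!` in the union bound
  let I : Set (Fin k → W ↪ Fin n) :=
    {T | StrictMono (fun i => T i w) ∧ Pairwise (Disjoint on fun i => Set.range (T i))}
  have hI : I.ncard ≤ 2 ^ n * n ^ ((Nat.card W - 1) * k) :=
    (Set.ncard_le_ncard fun _ hT => hT.1).trans (ncard_strictMono_le w n k)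
  calc _ ≤ erMeasure n p (⋃ T ∈ I.toFinite.toFinset,
          {ω | ∀ i, IsCopyEmb J (graphOfFn ω) (T i)}) := by
        refine measure_mono fun ω hω => ?_
        obtain ⟨T, hmono, hdisj, hcopy⟩ := HasDisjointCopies.exists_strictMono hω w
        exact Set.mem_biUnion (I.toFinite.mem_toFinset.mpr ⟨hmono, hdisj⟩) hcopy
    _ ≤ ∑ T ∈ I.toFinite.toFinset, erMeasure n p {ω | ∀ i, IsCopyEmb J (graphOfFn ω) (T i)} :=
        measure_biUnion_finset_le _ _
    _ ≤ I.toFinite.toFinset.card • ENNReal.ofReal p ^ (k * J.edgeSet.ncard) :=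
        Finset.sum_le_card_nsmul _ _ _ fun T hT =>
          erMeasure_forall_isCopyEmb_le J p T (I.toFinite.mem_toFinset.mp hT).2
    _ ≤ _ := by
      rw [nsmul_eq_mul, ← Set.ncard_eq_toFinset_card I]
      gcongr
      exact_mod_cast hI

lemma pow_mul_rpow_pow_le {r e : ℕ} {b c y : ℝ} (hb : 0 < b) (hy : 0 < y) (hc0 : 0 ≤ c)
    (hc1 : c ≤ 1) (he : e ≠ 0) :
    y ^ r * (c * (b * y) ^ (-(1 / ((e : ℝ) / r)))) ^ e ≤ c / b ^ r := by
  have hexp : ((b * y) ^ (-(1 / ((e : ℝ) / r)))) ^ e = ((b * y) ^ r)⁻¹ := by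
    rw [← Real.rpow_natCast _ e, ← Real.rpow_mul (by positivity), one_div_div, neg_mul,
      div_mul_cancel₀ _ (Nat.cast_ne_zero.mpr he), Real.rpow_neg (by positivity),
      Real.rpow_natCast]
  calc y ^ r * (c * (b * y) ^ (-(1 / ((e : ℝ) / r)))) ^ e = c ^ e / b ^ r := by
        rw [mul_pow, hexp, mul_pow]
        field_simp
    _ ≤ c / b ^ r := by gcongr; exact pow_le_of_le_one hc0 hc1 he

lemma rpow_div_pow_le_pow {t ε : ℝ} {h m k : ℕ} (ht0 : 0 < t) (ht1 : t ≤ 1) (hε : 0 < ε)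
    (hk : ε * m ≤ k) :
    (t ^ ((h : ℝ) / ε)) ^ k ≤ t ^ (h * m) := by
  rw [← Real.rpow_natCast _ k, ← Real.rpow_mul ht0.le, ← Real.rpow_natCast _ (h * m)]
  refine Real.rpow_le_rpow_of_exponent_ge ht0 ht1 ?_
  calc ((h * m : ℕ) : ℝ) = (h / ε) * (ε * m) := by push_cast; field_simp
    _ ≤ (h / ε) * k := by gcongr

lemma mul_le_sub_floor {a : ℝ} {h m : ℕ} (ha : 0 ≤ a) (hah : a * h ≤ 1) :
    (1 - a * h) * m ≤ ((m - ⌊a * ((h * m : ℕ) : ℝ)⌋₊ : ℕ) : ℝ) := by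
  have hahm : a * ((h * m : ℕ) : ℝ) = a * h * m := by push_cast; ring
  have hfloor := Nat.floor_le (mul_nonneg ha (Nat.cast_nonneg (h * m)))
  have hle : a * ((h * m : ℕ) : ℝ) ≤ m := hahm ▸ mul_le_of_le_one_left (Nat.cast_nonneg m) hah
  rw [Nat.cast_sub (Nat.floor_le_of_le hle)]
  linarith

-- the constant `c` of the theorem, where `r + 1` is the order of a densest subgraph of `H`
noncomputable def tilingConst (b ε : ℝ) (h r : ℕ) : ℝ :=
  min 1 (b ^ r * (1 / 4) ^ ((h : ℝ) / ε))

lemma two_pow_mul_pow_mul_ofReal_pow_le {b ε q : ℝ} {h m r e k : ℕ} (hb : 0 < b) (hε : 0 < ε)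
    (hh : 0 < h) (hm : 0 < m) (he : e ≠ 0) (hk : ε * m ≤ k)
    (hq : q ≤ tilingConst b ε h r * (b * ((h * m : ℕ) : ℝ)) ^ (-(1 / ((e : ℝ) / r)))) :
    2 ^ (h * m) * ((h * m : ℕ) : ENNReal) ^ (r * k) * ENNReal.ofReal q ^ (k * e) ≤
      ENNReal.ofReal ((1 / 2) ^ m) := by
  set n := h * m
  set δ : ℝ := (1 / 4) ^ ((h : ℝ) / ε)
  set x := tilingConst b ε h r * (b * n) ^ (-(1 / ((e : ℝ) / r)))
  have hx0 : 0 ≤ x := by unfold x tilingConst; positivity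
  have hx : (n : ℝ) ^ r * x ^ e ≤ δ := calc
    (n : ℝ) ^ r * x ^ e ≤ tilingConst b ε h r / b ^ r :=
      pow_mul_rpow_pow_le hb (by positivity) (by unfold tilingConst; positivity)
        (min_le_left _ _) he
    _ ≤ δ := by
      rw [div_le_iff₀ (by positivity), mul_comm]
      exact min_le_right _ _
  clear_value x
  calc 2 ^ n * (n : ENNReal) ^ (r * k) * ENNReal.ofReal q ^ (k * e)
      ≤ 2 ^ n * (n : ENNReal) ^ (r * k) * ENNReal.ofReal x ^ (k * e) := by gcongr
    _ = ENNReal.ofReal (2 ^ n * (n ^ r * x ^ e) ^ k) := by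
      rw [ENNReal.ofReal_mul (by positivity), ENNReal.ofReal_pow (by positivity),
        ENNReal.ofReal_pow (by positivity), ENNReal.ofReal_mul (by positivity),
        ENNReal.ofReal_pow (by positivity), ENNReal.ofReal_pow hx0,
        ENNReal.ofReal_natCast, ENNReal.ofReal_ofNat]
      ring
    _ ≤ ENNReal.ofReal ((1 / 2) ^ m) := by
      refine ENNReal.ofReal_le_ofReal ?_
      calc 2 ^ n * (n ^ r * x ^ e) ^ k ≤ (2 : ℝ) ^ n * δ ^ k := by gcongr
        _ ≤ 2 ^ n * (1 / 4) ^ n := by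
          gcongr
          exact rpow_div_pow_le_pow (by norm_num) (by norm_num) hε hk
        _ = (1 / 2) ^ n := by rw [← mul_pow]; norm_num
        _ ≤ (1 / 2) ^ m :=
          pow_le_pow_of_le_one (by norm_num) (by norm_num) (Nat.le_mul_of_pos_left m hh)

/-- extremal example, Section 2.1: for `H` with at least one edge and
`a + b = 1`, `b > a(|H|-1)`, there is `c = c(H, ε) > 0` (with `ε := b - a(|H|-1)`) such that,
for `G_n` the complete bipartite graph on `[n]` with parts of sizes `an` and `bn`
(`n` divisible by `|H|`), if `p ≤ c (bn)^{-1/d*(H)}` then a.a.s. `G_n ∪ G_{n,p}` has no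
perfect `H`-tiling. -/
theorem statement1 (h : ℕ) (H : SimpleGraph (Fin h)) (hH : H.edgeSet.Nonempty)
    (a b : ℝ) (ha : 0 < a) (hb : 0 < b) (hab : a + b = 1) (hba : a * ((h : ℝ) - 1) < b) :
    ∃ c : ℝ, 0 < c ∧
      ∀ (p : ℕ → ℝ) (A : (m : ℕ) → Set (Fin (h * m))),
        (∀ m : ℕ, (A m).ncard = ⌊a * ((h * m : ℕ) : ℝ)⌋₊) →
        (∀ m : ℕ, p m ≤ c * (b * ((h * m : ℕ) : ℝ)) ^ (-(1 / dStar H))) →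
        Tendsto
          (fun m : ℕ =>
            erMeasure (h * m) (p m)
              {ω | HasPerfectHTiling H
                (SimpleGraph.fromRel (fun u v => u ∈ A m ∧ v ∉ A m) ⊔ graphOfFn ω)})
          atTop (nhds 0) := by
  obtain ⟨H', ⟨w, hw⟩, he, hdStar⟩ := exists_subgraph_dStar_eq hH
  have : Nonempty (Fin h) := ⟨w⟩
  have hε : 0 < 1 - a * h := by linarith
  refine ⟨tilingConst b (1 - a * h) h (H'.verts.ncard - 1),
    by unfold tilingConst; positivity, fun p A hA hp => ?_⟩
  have hhalf : Tendsto (fun m : ℕ => ENNReal.ofReal ((1 / 2) ^ m)) atTop (nhds 0) := by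
    simpa using ENNReal.tendsto_ofReal
      (tendsto_pow_atTop_nhds_zero_of_lt_one (r := (1 / 2 : ℝ)) (by norm_num) (by norm_num))
  refine tendsto_of_tendsto_of_tendsto_of_le_of_le' tendsto_const_nhds hhalf
    (.of_forall fun _ => zero_le) ?_
  filter_upwards [eventually_ge_atTop 1] with m hm
  calc _ ≤ erMeasure (h * m) (p m)
        {ω | HasDisjointCopies H'.coe (graphOfFn ω) (m - (A m).ncard)} :=
        measure_mono fun ω hω => (hω.hasDisjointCopies_of_sup (by simp)).coe_subgraph H'
    _ ≤ _ := by
      have := erMeasure_hasDisjointCopies_le H'.coe ⟨w, hw⟩ (h * m) (m - (A m).ncard) (p m)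
      rwa [H'.ncard_edgeSet_coe, Nat.card_coe_set_eq] at this
    _ ≤ _ := two_pow_mul_pow_mul_ofReal_pow_le hb hε Fin.pos' hm he
        (hA m ▸ mul_le_sub_floor ha.le (by linarith)) (hdStar ▸ hp m)
end

section
/- Given any t ∈ ℕ and ε > 0, there is an integer n₀ = n₀(t, ε) so that: if n ≥ n₀ and G is a graph on n vertices with minimum degree δ(G) ≥ n/(t+1), then G contains a K_{1,t}-tiling that covers all but at most εn vertices of G. -/
open MeasureTheory Filter

/-! Take a maximum family `S` of vertex-disjoint copies of `K_{1,t}` and let `U` be the set of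
uncovered vertices. By maximality a vertex of `U` has fewer than `t` neighbours in `U`, and no
star of `S` has two vertices with at least `2t` and at least `t` neighbours in `U` (else the star
could be traded for two). The second fact bounds the number of edges between `U` and a star by
`|U| + 2t(t+1)`; the first and the minimum degree give each vertex of `U` at least
`n/(t+1) - t` covered neighbours. Comparing the two counts of the edges between `U` and the
covered vertices yields `|U|² ≤ 2t(t+1)n`, which is at most `(εn)²` once `n ≥ 2t(t+1)/ε²`. -/

open Finset

lemma Finset.sum_le_add_of_no_two_large {ι : Type*} [DecidableEq ι] (s : Finset ι)
    (f : ι → ℕ) {M t : ℕ} (hM : ∀ i ∈ s, f i ≤ M)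
    (h : ∀ i ∈ s, ∀ j ∈ s, i ≠ j → 2 * t ≤ f i → f j < t) :
    ∑ i ∈ s, f i ≤ M + 2 * t * #s := by
  by_cases hbig : ∃ i ∈ s, 2 * t ≤ f i
  · obtain ⟨i, hi, hfi⟩ := hbig
    have hrest : ∑ j ∈ s.erase i, f j ≤ #(s.erase i) • t :=
      sum_le_card_nsmul _ _ _ fun j hj =>
        (h i hi j (mem_erase.1 hj).2 (mem_erase.1 hj).1.symm hfi).le
    rw [← add_sum_erase s f hi]
    have := card_erase_le (s := s) (a := i)
    simp only [smul_eq_mul] at hrest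
    nlinarith [hM i hi]
  · push Not at hbig
    have := sum_le_card_nsmul s f (2 * t) fun i hi => (hbig i hi).le
    rw [smul_eq_mul] at this
    linarith

section StarSystem

variable {V : Type*} {G : SimpleGraph V} {t : ℕ}

def IsStar (G : SimpleGraph V) (t : ℕ) (p : V × Finset V) : Prop :=
  #p.2 = t ∧ ∀ x ∈ p.2, G.Adj p.1 x

lemma IsStar.center_notMem {p : V × Finset V} (h : IsStar G t p) : p.1 ∉ p.2 :=
  fun hc => G.irrefl (h.2 _ hc)

variable [DecidableEq V]

def starVerts (p : V × Finset V) : Finset V := insert p.1 p.2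

lemma center_mem_starVerts (p : V × Finset V) : p.1 ∈ starVerts p := mem_insert_self _ _

lemma IsStar.card_starVerts {p : V × Finset V} (h : IsStar G t p) : #(starVerts p) = t + 1 := by
  rw [starVerts, card_insert_of_notMem h.center_notMem, h.1]

def IsStarSystem (G : SimpleGraph V) (t : ℕ) (S : Finset (V × Finset V)) : Prop :=
  (∀ p ∈ S, IsStar G t p) ∧ (S : Set (V × Finset V)).PairwiseDisjoint starVerts

def covered (S : Finset (V × Finset V)) : Finset V := S.biUnion starVerts

lemma starVerts_subset_covered {S : Finset (V × Finset V)} {p : V × Finset V} (hp : p ∈ S) :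
    starVerts p ⊆ covered S :=
  subset_biUnion_of_mem _ hp

lemma notMem_of_disjoint_covered {S : Finset (V × Finset V)} {q : V × Finset V}
    (hq : Disjoint (starVerts q) (covered S)) : q ∉ S := fun hqS =>
  disjoint_left.1 hq (center_mem_starVerts q)
    (starVerts_subset_covered hqS (center_mem_starVerts q))

namespace IsStarSystem

variable {S : Finset (V × Finset V)}

lemma card_covered (hS : IsStarSystem G t S) : #(covered S) = #S * (t + 1) := by
  rw [covered, card_biUnion hS.2, sum_congr rfl fun p hp => (hS.1 p hp).card_starVerts,
    sum_const, smul_eq_mul]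

lemma mono {S' : Finset (V × Finset V)} (hS : IsStarSystem G t S) (h : S' ⊆ S) :
    IsStarSystem G t S' :=
  ⟨fun p hp => hS.1 p (h hp), hS.2.subset (coe_subset.2 h)⟩

lemma insert (hS : IsStarSystem G t S) {q : V × Finset V} (hq : IsStar G t q)
    (hdisj : Disjoint (starVerts q) (covered S)) : IsStarSystem G t (insert q S) := by
  refine ⟨fun p hp => ?_, ?_⟩
  · rcases mem_insert.1 hp with rfl | hp
    exacts [hq, hS.1 p hp]
  · rw [coe_insert]
    exact hS.2.insert fun p hp _ => hdisj.mono_right (starVerts_subset_covered hp)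

lemma disjoint_covered_erase (hS : IsStarSystem G t S) {p : V × Finset V} (hp : p ∈ S) {z : V}
    (hz : z ∈ starVerts p) {D : Finset V} (hD : Disjoint D (covered S)) :
    Disjoint (starVerts (z, D)) (covered (S.erase p)) := by
  have hsub : covered (S.erase p) ⊆ covered S :=
    biUnion_subset_biUnion_of_subset_left _ (erase_subset _ _)
  refine disjoint_insert_left.2 ⟨fun hz' => ?_, hD.mono_right hsub⟩
  obtain ⟨q, hq, hzq⟩ := mem_biUnion.1 hz'
  exact disjoint_left.1 (hS.2 hp (mem_erase.1 hq).2 (mem_erase.1 hq).1.symm) hz hzq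

lemma exchange (hS : IsStarSystem G t S) {p q₁ q₂ : V × Finset V} (hp : p ∈ S)
    (hq₁ : IsStar G t q₁) (hq₂ : IsStar G t q₂)
    (h₁ : Disjoint (starVerts q₁) (covered (S.erase p)))
    (h₂ : Disjoint (starVerts q₂) (covered (S.erase p)))
    (h₁₂ : Disjoint (starVerts q₁) (starVerts q₂)) :
    IsStarSystem G t (Insert.insert q₁ (Insert.insert q₂ (S.erase p))) ∧
      #(Insert.insert q₁ (Insert.insert q₂ (S.erase p))) = #S + 1 := by
  have h₁' : Disjoint (starVerts q₁) (covered (Insert.insert q₂ (S.erase p))) := by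
    rw [covered, biUnion_insert]
    exact disjoint_union_right.2 ⟨h₁₂, h₁⟩
  refine ⟨((hS.mono (erase_subset _ _)).insert hq₂ h₂).insert hq₁ h₁', ?_⟩
  rw [card_insert_of_notMem (notMem_of_disjoint_covered h₁'),
    card_insert_of_notMem (notMem_of_disjoint_covered h₂), card_erase_of_mem hp]
  have := card_pos.2 ⟨p, hp⟩
  omega

end IsStarSystem

def IsMaxStarSystem (G : SimpleGraph V) (t : ℕ) (S : Finset (V × Finset V)) : Prop :=
  IsStarSystem G t S ∧ ∀ S', IsStarSystem G t S' → #S' ≤ #S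

lemma exists_isMaxStarSystem [Fintype V] (G : SimpleGraph V) (t : ℕ) :
    ∃ S, IsMaxStarSystem G t S := by
  classical
  obtain ⟨S, hS, hmax⟩ := exists_max_image (univ.filter (IsStarSystem G t)) card
    ⟨∅, mem_filter.2 ⟨mem_univ _, by simp [IsStarSystem]⟩⟩
  exact ⟨S, (mem_filter.1 hS).2, fun S' hS' => hmax S' (mem_filter.2 ⟨mem_univ _, hS'⟩)⟩

end StarSystem

namespace IsMaxStarSystem

variable {V : Type*} [Fintype V] [DecidableEq V] {G : SimpleGraph V} [DecidableRel G.Adj] {t : ℕ}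
  {S : Finset (V × Finset V)}

lemma card_adj_uncovered_lt (hS : IsMaxStarSystem G t S) {x : V} (hx : x ∈ (covered S)ᶜ) :
    #{y ∈ (covered S)ᶜ | G.Adj x y} < t := by
  by_contra! hle
  obtain ⟨L, hL, hLcard⟩ := exists_subset_card_eq hle
  have hstar : IsStar G t (x, L) := ⟨hLcard, fun y hy => (mem_filter.1 (hL hy)).2⟩
  have hdisj : Disjoint (starVerts (x, L)) (covered S) := by
    rw [← subset_compl_iff_disjoint_right]
    exact insert_subset hx fun y hy => (mem_filter.1 (hL hy)).1
  have := hS.2 _ (hS.1.insert hstar hdisj)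
  rw [card_insert_of_notMem (notMem_of_disjoint_covered hdisj)] at this
  omega

/-- If one vertex of a star has `2t` uncovered neighbours and another has `t`, the star can be
replaced by two stars centred at these vertices. -/
lemma card_adj_uncovered_lt_of_two_mul_le (hS : IsMaxStarSystem G t S) {p : V × Finset V}
    (hp : p ∈ S) {v w : V} (hv : v ∈ starVerts p) (hw : w ∈ starVerts p) (hvw : v ≠ w)
    (hv₂ : 2 * t ≤ #{y ∈ (covered S)ᶜ | G.Adj v y}) :
    #{y ∈ (covered S)ᶜ | G.Adj w y} < t := by
  by_contra! hw₁
  obtain ⟨B, hB, hBcard⟩ := exists_subset_card_eq hw₁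
  have hA' : t ≤ #({y ∈ (covered S)ᶜ | G.Adj v y} \ B) := by
    have := card_le_card_sdiff_add_card (s := {y ∈ (covered S)ᶜ | G.Adj v y}) (t := B)
    omega
  obtain ⟨A, hA, hAcard⟩ := exists_subset_card_eq hA'
  have hAU : Disjoint A (covered S) := by
    rw [← subset_compl_iff_disjoint_right]
    exact fun y hy => (mem_filter.1 (mem_sdiff.1 (hA hy)).1).1
  have hBU : Disjoint B (covered S) := by
    rw [← subset_compl_iff_disjoint_right]
    exact fun y hy => (mem_filter.1 (hB hy)).1
  have hvC := starVerts_subset_covered hp hv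
  have hwC := starVerts_subset_covered hp hw
  have hAB : Disjoint (starVerts (v, A)) (starVerts (w, B)) := by
    refine disjoint_insert_left.2 ⟨?_, disjoint_insert_right.2 ⟨?_, ?_⟩⟩
    · exact fun h => (mem_insert.1 h).elim hvw fun h => disjoint_left.1 hBU h hvC
    · exact fun h => disjoint_left.1 hAU h hwC
    · exact disjoint_left.2 fun y hy => (mem_sdiff.1 (hA hy)).2
  have hnew := hS.1.exchange hp
    ⟨hAcard, fun y hy => (mem_filter.1 (mem_sdiff.1 (hA hy)).1).2⟩
    ⟨hBcard, fun y hy => (mem_filter.1 (hB hy)).2⟩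
    (hS.1.disjoint_covered_erase hp hv hAU) (hS.1.disjoint_covered_erase hp hw hBU) hAB
  have := hS.2 _ hnew.1
  omega

lemma sum_card_adj_uncovered_le (hS : IsMaxStarSystem G t S) {p : V × Finset V} (hp : p ∈ S) :
    ∑ y ∈ starVerts p, #{x ∈ (covered S)ᶜ | G.Adj y x} ≤
      #(covered S)ᶜ + 2 * t * (t + 1) := by
  rw [← (hS.1.1 p hp).card_starVerts]
  exact sum_le_add_of_no_two_large _ _ (fun y _ => card_filter_le _ _)
    fun v hv w hw hvw => hS.card_adj_uncovered_lt_of_two_mul_le hp hv hw hvw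

lemma sum_card_adj_covered_le (hS : IsMaxStarSystem G t S) :
    ∑ x ∈ (covered S)ᶜ, #{y ∈ covered S | G.Adj x y} ≤
      #S * (#(covered S)ᶜ + 2 * t * (t + 1)) := by
  have hswap := sum_card_bipartiteAbove_eq_sum_card_bipartiteBelow G.Adj
    (s := (covered S)ᶜ) (t := covered S)
  simp only [bipartiteAbove, bipartiteBelow, G.adj_comm _ (_ : V)] at hswap
  rw [hswap, ← smul_eq_mul, covered, sum_biUnion hS.1.2]
  exact sum_le_card_nsmul _ _ _ fun p hp => hS.sum_card_adj_uncovered_le hp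

lemma degree_le (hS : IsMaxStarSystem G t S) {x : V} (hx : x ∈ (covered S)ᶜ) :
    G.degree x ≤ #{y ∈ covered S | G.Adj x y} + t := by
  have hsplit : G.neighborFinset x =
      {y ∈ covered S | G.Adj x y} ∪ {y ∈ (covered S)ᶜ | G.Adj x y} := by
    ext y
    simp only [SimpleGraph.mem_neighborFinset, mem_union, mem_filter, mem_compl]
    tauto
  rw [← G.card_neighborFinset_eq_degree, hsplit]
  have := hS.card_adj_uncovered_lt hx
  have := card_union_le {y ∈ covered S | G.Adj x y} {y ∈ (covered S)ᶜ | G.Adj x y}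
  omega

lemma card_uncovered_sq_le (hS : IsMaxStarSystem G t S)
    (hdeg : ∀ v, Fintype.card V ≤ (t + 1) * G.degree v) :
    #(covered S)ᶜ ^ 2 ≤ 2 * t * (t + 1) * Fintype.card V := by
  have hn : Fintype.card V = #(covered S)ᶜ + #S * (t + 1) := by
    rw [← hS.1.card_covered, card_compl, Nat.sub_add_cancel (card_le_univ _)]
  set u := #(covered S)ᶜ
  set e := ∑ x ∈ (covered S)ᶜ, #{y ∈ covered S | G.Adj x y}
  have hlower : u * Fintype.card V ≤ (t + 1) * (e + u * t) := by
    calc u * Fintype.card V = ∑ _x ∈ (covered S)ᶜ, Fintype.card V := by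
          rw [sum_const, smul_eq_mul]
      _ ≤ ∑ x ∈ (covered S)ᶜ, (t + 1) * (#{y ∈ covered S | G.Adj x y} + t) :=
        sum_le_sum fun x hx => (hdeg x).trans (Nat.mul_le_mul_left _ (hS.degree_le hx))
      _ = (t + 1) * (e + u * t) := by rw [← mul_sum, sum_add_distrib, sum_const, smul_eq_mul]
  have hupper : e ≤ #S * (u + 2 * t * (t + 1)) := hS.sum_card_adj_covered_le
  rw [hn] at hlower ⊢
  nlinarith [Nat.mul_le_mul_left (t + 1) hupper, Nat.zero_le (u * t * (t + 1))]

end IsMaxStarSystem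

section Tiling

variable {V : Type*} {G : SimpleGraph V} {t : ℕ}

noncomputable def IsStar.toEmbedding {p : V × Finset V} (h : IsStar G t p) :
    (Fin 1 ⊕ Fin t) ↪ V :=
  (Equiv.sumCongr (Equiv.ofUnique (Fin 1) ({p.1} : Set V)) (p.2.equivFinOfCardEq h.1).symm
    |>.toEmbedding).trans
    (Function.Embedding.sumSet (t := (p.2 : Set V))
      (Set.disjoint_singleton_left.2 h.center_notMem))

lemma IsStar.isCopyEmb_toEmbedding {p : V × Finset V} (h : IsStar G t p) :
    IsCopyEmb (completeBipartiteGraph (Fin 1) (Fin t)) G h.toEmbedding := by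
  rintro (a | a) (b | b) hab
  · simp at hab
  · exact h.2 _ (coe_mem _)
  · exact (h.2 _ (coe_mem _)).symm
  · simp at hab

variable [DecidableEq V]

lemma IsStar.range_toEmbedding {p : V × Finset V} (h : IsStar G t p) :
    Set.range h.toEmbedding = starVerts p := by
  rw [IsStar.toEmbedding, Function.Embedding.coe_trans, Equiv.coe_toEmbedding,
    (Equiv.surjective _).range_comp, Function.Embedding.sumSet_range, starVerts, coe_insert,
    Set.singleton_union]

lemma IsStarSystem.exists_isHTiling {S : Finset (V × Finset V)} (hS : IsStarSystem G t S) :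
    ∃ F : Set ((Fin 1 ⊕ Fin t) ↪ V),
      IsHTiling (completeBipartiteGraph (Fin 1) (Fin t)) G F ∧ tilingCover F = covered S := by
  refine ⟨Set.range fun p : S => (hS.1 p p.2).toEmbedding, ⟨?_, ?_⟩, ?_⟩
  · rintro _ ⟨p, rfl⟩
    exact (hS.1 p p.2).isCopyEmb_toEmbedding
  · rintro _ ⟨p, rfl⟩ _ ⟨q, rfl⟩ hpq
    rw [IsStar.range_toEmbedding, IsStar.range_toEmbedding, disjoint_coe]
    exact hS.2 p.2 q.2 fun h => hpq (by rw [Subtype.ext h])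
  · simp only [tilingCover, Set.biUnion_range, IsStar.range_toEmbedding, covered, coe_biUnion,
      Set.iUnion_subtype]
    rfl

end Tiling

/-- Theorem 4.1, Komlós, special case: for any `t ∈ ℕ` and `ε > 0` there
is `n₀ = n₀(t, ε)` such that every graph `G` on `n ≥ n₀` vertices with
`δ(G) ≥ n/(t+1)` contains a `K_{1,t}`-tiling covering all but at most `εn` vertices. -/
theorem statement8 (t : ℕ) (ε : ℝ) (hε : 0 < ε) :
    ∃ n₀ : ℕ, ∀ n : ℕ, n₀ ≤ n → ∀ G : SimpleGraph (Fin n),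
      (∀ v : Fin n, (n : ℝ) / ((t : ℝ) + 1) ≤ ((G.neighborSet v).ncard : ℝ)) →
      ∃ F : Set ((Fin 1 ⊕ Fin t) ↪ Fin n),
        IsHTiling (completeBipartiteGraph (Fin 1) (Fin t)) G F ∧
          (((Set.univ : Set (Fin n)) \ tilingCover F).ncard : ℝ) ≤ ε * n := by
  classical
  refine ⟨⌈2 * t * (t + 1) / ε ^ 2⌉₊, fun n hn G hdeg => ?_⟩
  obtain ⟨S, hS⟩ := exists_isMaxStarSystem G t
  obtain ⟨F, hF, hcover⟩ := hS.1.exists_isHTiling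
  refine ⟨F, hF, ?_⟩
  have hdeg' : ∀ v, Fintype.card (Fin n) ≤ (t + 1) * G.degree v := fun v => by
    have := hdeg v
    rw [← G.coe_neighborFinset, Set.ncard_coe_finset, G.card_neighborFinset_eq_degree,
      div_le_iff₀ (by positivity)] at this
    rw [Fintype.card_fin, mul_comm]
    exact_mod_cast this
  have hsq : (#(covered S)ᶜ : ℝ) ^ 2 ≤ 2 * t * (t + 1) * n := by
    exact_mod_cast (Fintype.card_fin n) ▸ hS.card_uncovered_sq_le hdeg'
  have hn' : 2 * t * (t + 1) ≤ ε ^ 2 * n :=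
    (div_le_iff₀' (by positivity)).1 ((Nat.le_ceil _).trans (by exact_mod_cast hn))
  rw [hcover, ← Set.compl_eq_univ_diff, ← coe_compl, Set.ncard_coe_finset]
  refine (pow_le_pow_iff_left₀ (by positivity) (by positivity) two_ne_zero).1 ?_
  nlinarith
end

section
/- Let 0 < ε₁ ≪ ε₂ ≪ d < 1 and let N be sufficiently large. Let G' be a graph with disjoint vertex sets S, T satisfying (1−2ε₁)N ≤ |S| ≤ |T| ≤ (1+ε₁)N, such that (S, T)_{G'} is (3ε₁, d/6)-super-regular and |S| + |T| is even. Let G'' be any graph on S ∪ T such that every subset of T of size at least ε₂N contains an edge of G''. Then the graph on S ∪ T whose edge set is the union of the edges of G'[S,T] and of G'' contains a perfect matching. -/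
open MeasureTheory Filter

/-! Greedily remove `|T| - |S|` vertices of `T` in pairs joined by edges of `G''`; this is
possible as long as at least `ε₂ N` vertices of `T` remain, and `|S| ≥ ε₂ N`. The rest `T'` of
`T` has exactly `|S|` vertices, and since only `O(ε₁ N)` vertices were removed, super-regularity
of `(S, T)` gives Hall's condition between `S` and `T'`: small sets of `S` via the minimum degree
into `T`, medium ones via the density condition, and sets missing fewer than `3 ε₁ |T|` vertices
of `S` via the minimum degree of the vertices of `T'` into `S`. -/

namespace SimpleGraph

variable {V : Type*}

lemma exists_isMatching_ncard_eq_of_forall_exists_adj {G : SimpleGraph V} {T : Set V}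
    (hT : T.Finite) {b : ℕ} (hQ : ∀ Q ⊆ T, b ≤ Q.ncard → ∃ u ∈ Q, ∃ v ∈ Q, G.Adj u v) (k : ℕ)
    (hk : b + 2 * k ≤ T.ncard) :
    ∃ M : G.Subgraph, M.IsMatching ∧ M.verts ⊆ T ∧ M.verts.ncard = 2 * k := by
  induction k with
  | zero => exact ⟨⊥, fun _ h => h.elim, by simp, by simp⟩
  | succ k ih =>
    obtain ⟨M, hM, hMT, hMcard⟩ := ih (by omega)
    have hfree : b ≤ (T \ M.verts).ncard := by
      rw [Set.ncard_sdiff hMT (hT.subset hMT)]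
      omega
    obtain ⟨u, hu, v, hv, huv⟩ := hQ _ Set.sdiff_subset hfree
    have hdisj : Disjoint M.support (G.subgraphOfAdj huv).support := by
      rw [hM.support_eq_verts, (Subgraph.IsMatching.subgraphOfAdj huv).support_eq_verts,
        subgraphOfAdj_verts, Set.disjoint_insert_right, Set.disjoint_singleton_right]
      exact ⟨hu.2, hv.2⟩
    refine ⟨M ⊔ G.subgraphOfAdj huv, hM.sup (Subgraph.IsMatching.subgraphOfAdj huv) hdisj, ?_, ?_⟩
    · rw [Subgraph.verts_sup, subgraphOfAdj_verts]
      exact Set.union_subset hMT (Set.insert_subset hu.1 (Set.singleton_subset_iff.mpr hv.1))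
    · rw [Subgraph.verts_sup, subgraphOfAdj_verts, Set.union_insert, Set.union_singleton,
        Set.ncard_insert_of_notMem (by simp [hu.2, G.ne_of_adj huv]) ((hT.subset hMT).insert v),
        Set.ncard_insert_of_notMem hv.2 (hT.subset hMT), hMcard]
      ring

lemma Subgraph.IsMatching.exists_isPerfectMatching_induce {G : SimpleGraph V} {M : G.Subgraph}
    {s : Set V} (hM : M.IsMatching) (hs : M.verts = s) :
    ∃ M' : (G.induce s).Subgraph, M'.IsPerfectMatching := by
  refine ⟨M.comap (Embedding.induce s).toHom, Subgraph.isPerfectMatching_iff.mpr fun v => ?_⟩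
  obtain ⟨w, hvw, huniq⟩ := hM (v := v) (hs.symm ▸ v.2)
  have hw : w ∈ s := hs ▸ M.edge_vert hvw.symm
  exact ⟨⟨w, hw⟩, ⟨M.adj_sub hvw, hvw⟩, fun u hu => Subtype.ext (huniq _ hu.2)⟩

end SimpleGraph

lemma Set.exists_equiv_of_forall_ncard_le {V : Type*} [Finite V] {S T : Set V}
    (r : V → V → Prop) (hcard : T.ncard = S.ncard)
    (hall : ∀ X ⊆ S, X.ncard ≤ {y ∈ T | ∃ x ∈ X, r x y}.ncard) :
    ∃ e : S ≃ T, ∀ x : S, r x (e x) := by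
  classical
  have := Fintype.ofFinite V
  have hall' : ∀ A : Finset S,
      A.card ≤ (Finset.univ.filter fun y : T => ∃ x ∈ A, r x y).card := by
    intro A
    have himage : {y ∈ T | ∃ x ∈ Subtype.val '' (A : Set S), r x y} =
        Subtype.val '' ((Finset.univ.filter fun y : T => ∃ x ∈ A, r x y : Finset T) : Set T) := by
      ext y
      constructor
      · rintro ⟨hy, _, ⟨x, hxA, rfl⟩, hxy⟩
        exact ⟨⟨y, hy⟩, Finset.mem_filter.mpr ⟨Finset.mem_univ _, x, hxA, hxy⟩, rfl⟩
      · rintro ⟨y, hy, rfl⟩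
        obtain ⟨-, x, hxA, hxy⟩ := Finset.mem_filter.mp hy
        exact ⟨y.2, x, ⟨x, hxA, rfl⟩, hxy⟩
    have := hall _ (Subtype.coe_image_subset S A)
    rwa [himage, Set.ncard_image_of_injective _ Subtype.val_injective,
      Set.ncard_image_of_injective _ Subtype.val_injective, Set.ncard_coe_finset,
      Set.ncard_coe_finset] at this
  obtain ⟨f, hf, hr⟩ :=
    (Fintype.all_card_le_filter_rel_iff_exists_injective (fun (x : S) (y : T) => r x y)).mp hall'
  have hbij : Function.Bijective f := (Nat.bijective_iff_injective_and_card f).mpr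
    ⟨hf, by rw [Nat.card_coe_set_eq, Nat.card_coe_set_eq, hcard]⟩
  exact ⟨Equiv.ofBijective f hbij, hr⟩

lemma pairDensity_eq_zero_of_forall_not_adj {V : Type*} {G : SimpleGraph V} {X Y : Set V}
    (h : ∀ x ∈ X, ∀ y ∈ Y, ¬ G.Adj x y) : pairDensity G X Y = 0 := by
  have hempty : {p : V × V | p.1 ∈ X ∧ p.2 ∈ Y ∧ G.Adj p.1 p.2} = ∅ :=
    Set.eq_empty_of_forall_notMem fun p hp => h _ hp.1 _ hp.2.1 hp.2.2
  simp [pairDensity, hempty]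

lemma IsSuperRegularPair.ncard_le_ncard_neighbors {V : Type*} [Finite V] {G : SimpleGraph V}
    {S T T' : Set V} {ε δ : ℝ} (hreg : IsSuperRegularPair G S T ε δ) (hδ : 0 ≤ δ)
    (hT' : T' ⊆ T) (hcard : T'.ncard = S.ncard)
    (hsmall : ε * S.ncard + (T \ T').ncard ≤ δ * T.ncard) (hlarge : ε * T.ncard ≤ δ * S.ncard)
    {X : Set V} (hXS : X ⊆ S) : X.ncard ≤ {y ∈ T' | ∃ x ∈ X, G.Adj x y}.ncard := by
  set Nb := {y ∈ T' | ∃ x ∈ X, G.Adj x y}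
  by_cases hX : (X.ncard : ℝ) < ε * S.ncard
  · obtain rfl | ⟨x, hx⟩ := X.eq_empty_or_nonempty
    · simp
    have hcover : G.neighborSet x ∩ T ⊆ Nb ∪ (T \ T') := by
      rintro y ⟨hxy, hyT⟩
      by_cases hyT' : y ∈ T'
      · exact Or.inl ⟨hyT', x, hx, hxy⟩
      · exact Or.inr ⟨hyT, hyT'⟩
    have hdeg := hreg.2.1 x (hXS hx)
    have hNb : ((G.neighborSet x ∩ T).ncard : ℝ) ≤ Nb.ncard + (T \ T').ncard := by
      exact_mod_cast (Set.ncard_le_ncard hcover).trans (Set.ncard_union_le _ _)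
    exact_mod_cast (by linarith : (X.ncard : ℝ) ≤ Nb.ncard)
  push Not at hX
  obtain hY | ⟨y, hyT', hyNb⟩ := (T' \ Nb).eq_empty_or_nonempty
  · calc X.ncard ≤ S.ncard := Set.ncard_le_ncard hXS
      _ = T'.ncard := hcard.symm
      _ ≤ Nb.ncard := Set.ncard_le_ncard (Set.sdiff_eq_empty.mp hY)
  -- `y` has more than `δ |S|` neighbours in `S`, none of them in `X`.
  have hXsmall : (X.ncard : ℝ) < S.ncard - ε * T.ncard := by
    have hsub : G.neighborSet y ∩ S ⊆ S \ X :=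
      fun z ⟨hyz, hzS⟩ => ⟨hzS, fun hzX => hyNb ⟨hyT', z, hzX, hyz.symm⟩⟩
    have hdeg := hreg.2.2 y (hT' hyT')
    have hnbr : ((G.neighborSet y ∩ S).ncard : ℝ) ≤ S.ncard - X.ncard := by
      rw [← Set.cast_ncard_sdiff hXS (Set.toFinite S)]
      exact_mod_cast Set.ncard_le_ncard hsub
    linarith
  have hYsmall : ((T' \ Nb).ncard : ℝ) < ε * T.ncard := by
    by_contra! hY
    have hdens := hreg.1 X hXS (T' \ Nb) (Set.sdiff_subset.trans hT') hX hY
    rw [pairDensity_eq_zero_of_forall_not_adj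
      fun x hx z hz hxz => hz.2 ⟨hz.1, x, hx, hxz⟩] at hdens
    linarith
  have hsplit : ((T' \ Nb).ncard : ℝ) = T'.ncard - Nb.ncard :=
    Set.cast_ncard_sdiff (fun _ hy => hy.1) (Set.toFinite T')
  rw [hcard] at hsplit
  exact_mod_cast (by linarith : (X.ncard : ℝ) ≤ Nb.ncard)

lemma hall_margins_of_size_bounds {d ε n s t : ℝ} (hd : d < 1) (hε : 0 < ε) (hεd : ε ≤ d / 100)
    (hs : (1 - 2 * ε) * n ≤ s) (hst : s ≤ t) (ht : t ≤ (1 + ε) * n) :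
    3 * ε * s + (t - s) ≤ d / 6 * t ∧ 3 * ε * t ≤ d / 6 * s := by
  have hn : 0 ≤ n := by nlinarith
  constructor
  · nlinarith [mul_le_mul_of_nonneg_left hεd hn, mul_le_mul_of_nonneg_left hεd hε.le]
  · nlinarith [mul_le_mul_of_nonneg_left hεd hn, mul_le_mul_of_nonneg_left hεd hε.le]

/-- Claim 5.7, the case `H = K₂`: if `(S, T)` is `(3ε₁, d/6)`-super-regular
with `(1-2ε₁)N ≤ |S| ≤ |T| ≤ (1+ε₁)N`, `|S| + |T|` even, and `G''` is any graph on `S ∪ T`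
such that every subset of `T` of size at least `ε₂N` contains an edge of `G''`, then the
graph on `S ∪ T` whose edges are those of `G'[S,T]` together with those of `G''` has a
perfect matching. -/
theorem statement15 (d : ℝ) (hd0 : 0 < d) (hd1 : d < 1) :
    ∃ e₂ : ℝ, 0 < e₂ ∧ ∀ ε₂ : ℝ, 0 < ε₂ → ε₂ ≤ e₂ →
    ∃ e₁ : ℝ, 0 < e₁ ∧ ∀ ε₁ : ℝ, 0 < ε₁ → ε₁ ≤ e₁ →
    ∃ N₀ : ℕ, ∀ N : ℕ, N₀ ≤ N →
    ∀ (V : Type) [Fintype V], ∀ (G' G'' : SimpleGraph V) (S T : Set V),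
      Disjoint S T →
      (1 - 2 * ε₁) * N ≤ (S.ncard : ℝ) → (S.ncard : ℝ) ≤ (T.ncard : ℝ) →
      (T.ncard : ℝ) ≤ (1 + ε₁) * N →
      IsSuperRegularPair G' S T (3 * ε₁) (d / 6) →
      2 ∣ (S.ncard + T.ncard) →
      (∀ Q ⊆ T, ε₂ * N ≤ (Q.ncard : ℝ) → ∃ u ∈ Q, ∃ v ∈ Q, G''.Adj u v) →
      ∃ M : ((SimpleGraph.fromRel fun u v =>
          G''.Adj u v ∨ (G'.Adj u v ∧ u ∈ S ∧ v ∈ T)).induce (S ∪ T)).Subgraph,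
        M.IsPerfectMatching := by
  refine ⟨1 / 2, by norm_num, fun ε₂ _ hε₂e => ⟨d / 100, by positivity, fun ε₁ hε₁ hε₁e =>
    ⟨0, fun N _ V _ G' G'' S T hST hS hST' hT hreg heven hQ => ?_⟩⟩⟩
  classical
  set H := SimpleGraph.fromRel fun u v => G''.Adj u v ∨ (G'.Adj u v ∧ u ∈ S ∧ v ∈ T)
  have hST_le : S.ncard ≤ T.ncard := by exact_mod_cast hST'
  obtain ⟨k, hk⟩ : ∃ k, T.ncard = S.ncard + 2 * k := ⟨(T.ncard - S.ncard) / 2, by omega⟩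
  have hQH : ∀ Q ⊆ T, ⌈ε₂ * N⌉₊ ≤ Q.ncard → ∃ u ∈ Q, ∃ v ∈ Q, H.Adj u v := fun Q hQT hQc => by
    obtain ⟨u, hu, v, hv, huv⟩ := hQ Q hQT (Nat.ceil_le.mp hQc)
    exact ⟨u, hu, v, hv, G''.ne_of_adj huv, Or.inl (Or.inl huv)⟩
  have hceil : ⌈ε₂ * N⌉₊ ≤ S.ncard := Nat.ceil_le.mpr (by nlinarith [(N.cast_nonneg : (0 : ℝ) ≤ N)])
  obtain ⟨M₁, hM₁, hM₁T, hM₁card⟩ :=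
    SimpleGraph.exists_isMatching_ncard_eq_of_forall_exists_adj (Set.toFinite T) hQH k (by omega)
  set T' := T \ M₁.verts
  have hT'card : T'.ncard = S.ncard := by rw [Set.ncard_sdiff hM₁T, hM₁card]; omega
  have hremoved : ((T \ T').ncard : ℝ) = T.ncard - S.ncard := by
    rw [Set.sdiff_sdiff_cancel_left hM₁T, hM₁card, hk]; push_cast; ring
  obtain ⟨hsmall, hlarge⟩ := hall_margins_of_size_bounds hd1 hε₁ hε₁e hS hST' hT
  obtain ⟨e, he⟩ := Set.exists_equiv_of_forall_ncard_le G'.Adj hT'card fun X hXS =>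
    hreg.ncard_le_ncard_neighbors (by positivity) Set.sdiff_subset hT'card
      (by rw [hremoved]; linarith) hlarge hXS
  obtain ⟨M₂, hM₂verts, hM₂⟩ := SimpleGraph.Subgraph.IsMatching.exists_of_disjoint_sets_of_equiv
    (G := H) (hST.mono_right Set.sdiff_subset) e
    fun x => ⟨G'.ne_of_adj (he x), Or.inl (Or.inr ⟨he x, x.2, (e x).2.1⟩)⟩
  have hdisj : Disjoint M₁.support M₂.support := by
    rw [hM₁.support_eq_verts, hM₂.support_eq_verts, hM₂verts]
    exact Set.disjoint_union_right.mpr ⟨(hST.mono_right hM₁T).symm, Set.disjoint_sdiff_right⟩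
  refine (hM₁.sup hM₂ hdisj).exists_isPerfectMatching_induce ?_
  rw [SimpleGraph.Subgraph.verts_sup, hM₂verts, Set.union_left_comm, Set.union_sdiff_cancel hM₁T]
end

section
/- Let H be a graph with |H| ≥ 3, let h := |H|−1 and let H' := H−x be the induced subgraph obtained by deleting a fixed vertex x ∈ V(H). Let 0 < 1/N ≪ ε₂ ≪ ε₃ ≪ ε₄ ≪ d₁ ≪ 1/|H|. Let G* be a graph with disjoint vertex classes S', T' with ε₄N ≤ |S'|, |T'| ≤ 2N such that: d_{G*}(X, Y) > d₁/2 for all X ⊆ S', Y ⊆ T' with |X| ≥ 2ε₂|S'| and |Y| ≥ 2ε₂|T'|; and every subset of S' of size at least 2ε₃N and every subset of T' of size at least 2ε₃N spans a copy of H' in G*. Then for all nonnegative integers a, b with ha + b ≤ |S'| − ε₄N and a + hb ≤ |T'| − ε₄N, the graph G*[S' ∪ T'] contains an H-tiling consisting of exactly a S-copies and exactly b T-copies of H. -/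
/-!
Greedy construction. While at least `ε₄ N` vertices of both `S'` and `T'` are unused, the density
condition gives an unused `y ∈ T'` with more than `2 ε₃ N` unused neighbours in `S'`; a copy of
`H - x` among them, completed by `y`, is a new `S`-copy, and symmetrically for `T`-copies. An
`S`-copy uses `h` vertices of `S'` and one of `T'`, so the budgets `ha + b ≤ |S'| - ε₄ N` and
`a + hb ≤ |T'| - ε₄ N` leave this much room until all `a + b` copies are placed.
-/

open MeasureTheory Filter

open Set

variable {α V : Type*}

lemma pairDensity_comm (G : SimpleGraph V) (X Y : Set V) :
    pairDensity G X Y = pairDensity G Y X := by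
  have : {p : V × V | p.1 ∈ Y ∧ p.2 ∈ X ∧ G.Adj p.1 p.2} =
      Prod.swap '' {p : V × V | p.1 ∈ X ∧ p.2 ∈ Y ∧ G.Adj p.1 p.2} := by
    rw [image_swap_eq_preimage_swap]
    ext ⟨u, w⟩
    exact ⟨fun ⟨hu, hw, h⟩ => ⟨hw, hu, h.symm⟩, fun ⟨hw, hu, h⟩ => ⟨hu, hw, h.symm⟩⟩
  rw [pairDensity, pairDensity, this, ncard_image_of_injective _ Prod.swap_injective, mul_comm]

lemma exists_lt_ncard_neighborSet_inter [Finite V] {G : SimpleGraph V} {X Y : Set V} {c : ℝ}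
    (hY : Y.Nonempty) (hc : c < pairDensity G X Y * X.ncard) :
    ∃ y ∈ Y, c < (G.neighborSet y ∩ X).ncard := by
  set P := {p : V × V | p.1 ∈ X ∧ p.2 ∈ Y ∧ G.Adj p.1 p.2}
  have hYfin := toFinite Y
  have hPsum : P.ncard ≤ ∑ y ∈ hYfin.toFinset, (G.neighborSet y ∩ X).ncard := by
    have hsub : P ⊆ ⋃ y ∈ hYfin.toFinset, (G.neighborSet y ∩ X) ×ˢ ({y} : Set V) := by
      rintro ⟨u, y⟩ ⟨hu, hy, huy⟩
      simp only [mem_iUnion, Finite.mem_toFinset]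
      exact ⟨y, hy, ⟨huy.symm, hu⟩, rfl⟩
    calc P.ncard ≤ (⋃ y ∈ hYfin.toFinset, (G.neighborSet y ∩ X) ×ˢ ({y} : Set V)).ncard :=
          ncard_le_ncard hsub (toFinite _)
      _ ≤ ∑ y ∈ hYfin.toFinset, ((G.neighborSet y ∩ X) ×ˢ ({y} : Set V)).ncard :=
          Finset.set_ncard_biUnion_le _ _
      _ = _ := by simp only [ncard_prod, ncard_singleton, mul_one]
  have hP : pairDensity G X Y * X.ncard * Y.ncard ≤ P.ncard := by
    rcases eq_or_ne ((X.ncard : ℝ) * Y.ncard) 0 with h | h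
    · rw [mul_assoc, h, mul_zero]; positivity
    · rw [pairDensity, mul_assoc, div_mul_cancel₀ _ h]
  have hY' : (0 : ℝ) < Y.ncard := by exact_mod_cast hY.ncard_pos
  have : ∑ _y ∈ hYfin.toFinset, c < ∑ y ∈ hYfin.toFinset, ((G.neighborSet y ∩ X).ncard : ℝ) := by
    rw [Finset.sum_const, ← ncard_eq_toFinset_card Y hYfin, nsmul_eq_mul]
    calc (Y.ncard : ℝ) * c < pairDensity G X Y * X.ncard * Y.ncard := by nlinarith
      _ ≤ P.ncard := hP
      _ ≤ _ := by exact_mod_cast hPsum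
  obtain ⟨y, hy, hlt⟩ := Finset.exists_lt_of_sum_lt this
  exact ⟨y, hYfin.mem_toFinset.mp hy, hlt⟩

lemma IsCopyEmb.exists_extend [DecidableEq α] {H : SimpleGraph α} {G : SimpleGraph V} {x : α}
    {g : ({y : α | y ≠ x} : Set α) ↪ V} (hg : IsCopyEmb (H.induce {y : α | y ≠ x}) G g)
    {v : V} (hv : v ∉ range g) (hadj : ∀ w ∈ range g, G.Adj v w) :
    ∃ f : α ↪ V, IsCopyEmb H G f ∧ f x = v ∧ range f = insert v (range g) := by
  refine ⟨(Equiv.optionSubtypeNe x).symm.toEmbedding.trans (g.optionElim v hv), ?_, ?_, ?_⟩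
  · intro u w huw
    by_cases hu : u = x
    · subst hu
      have hw : w ≠ u := (H.ne_of_adj huw).symm
      simpa [Equiv.optionSubtypeNe_symm_of_ne hw] using hadj _ (mem_range_self _)
    by_cases hw : w = x
    · subst hw
      simpa [Equiv.optionSubtypeNe_symm_of_ne hu] using (hadj _ (mem_range_self _)).symm
    simpa [Equiv.optionSubtypeNe_symm_of_ne hu, Equiv.optionSubtypeNe_symm_of_ne hw] using
      hg (show (H.induce {y : α | y ≠ x}).Adj ⟨u, hu⟩ ⟨w, hw⟩ from huw)
  · simp
  · rw [← Option.range_elim, ← (Equiv.optionSubtypeNe x).symm.surjective.range_comp]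
    congr 1
    funext u
    exact Option.elim'_eq_elim _ _ _

section Copies

variable {H : SimpleGraph α} {G : SimpleGraph V} {x : α} {S T : Set V} {f : α ↪ V}

/-- An `S`-copy of `H` in the paper's terminology; `IsSCopy H G x T S` is a `T`-copy. -/
def IsSCopy (H : SimpleGraph α) (G : SimpleGraph V) (x : α) (S T : Set V) (f : α ↪ V) : Prop :=
  IsCopyEmb H G f ∧ f x ∈ T ∧ ∀ u, u ≠ x → f u ∈ S

lemma IsSCopy.mono {S' T' : Set V} (hf : IsSCopy H G x S T f) (hS : S ⊆ S') (hT : T ⊆ T') :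
    IsSCopy H G x S' T' f :=
  ⟨hf.1, hT hf.2.1, fun u hu => hS (hf.2.2 u hu)⟩

lemma IsSCopy.range_subset (hf : IsSCopy H G x S T f) : range f ⊆ S ∪ T := by
  rintro _ ⟨u, rfl⟩
  by_cases hu : u = x
  · exact Or.inr (hu ▸ hf.2.1)
  · exact Or.inl (hf.2.2 u hu)

lemma IsSCopy.ne (hST : Disjoint S T) (hf : IsSCopy H G x S T f) {g : α ↪ V}
    (hg : IsSCopy H G x T S g) : f ≠ g := by
  rintro rfl
  exact hST.notMem_of_mem_left hg.2.1 hf.2.1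

lemma IsSCopy.ncard_range_inter_left_le [Finite α] (hST : Disjoint S T)
    (hf : IsSCopy H G x S T f) : (range f ∩ S).ncard ≤ Nat.card α - 1 := by
  have hsub : range f ∩ S ⊆ range f \ {f x} := fun v ⟨hv, hvS⟩ =>
    ⟨hv, fun h => hST.notMem_of_mem_left hvS (h ▸ hf.2.1)⟩
  calc (range f ∩ S).ncard ≤ (range f \ {f x}).ncard := ncard_le_ncard hsub (toFinite _)
    _ = Nat.card α - 1 := by
      rw [ncard_sdiff_singleton_of_mem (mem_range_self x), ncard_range_of_injective f.injective]

lemma IsSCopy.ncard_range_inter_right_le (hST : Disjoint S T) (hf : IsSCopy H G x S T f) :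
    (range f ∩ T).ncard ≤ 1 := by
  have hsub : range f ∩ T ⊆ {f x} := by
    rintro _ ⟨⟨u, rfl⟩, hu⟩
    by_contra h
    exact hST.notMem_of_mem_left (hf.2.2 u fun hux => h (hux ▸ rfl)) hu
  exact (ncard_le_ncard hsub (toFinite _)).trans (ncard_singleton _).le

lemma exists_isSCopy_of_lt_pairDensity [Finite V] [DecidableEq α] {X Y : Set V}
    (hXY : Disjoint X Y) (hY : Y.Nonempty) {δ c : ℝ} (hδ : δ < pairDensity G X Y)
    (hc : c < δ * X.ncard)
    (hcopy : ∀ W ⊆ X, c ≤ W.ncard → ∃ g : ({y : α | y ≠ x} : Set α) ↪ V,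
      IsCopyEmb (H.induce {y : α | y ≠ x}) G g ∧ range g ⊆ W) :
    ∃ f, IsSCopy H G x X Y f := by
  obtain ⟨y, hy, hyX⟩ := exists_lt_ncard_neighborSet_inter hY (hc.trans_le (by gcongr))
  obtain ⟨g, hg, hgW⟩ := hcopy _ inter_subset_right hyX.le
  obtain ⟨f, hf, hfx, hfg⟩ := hg.exists_extend (fun h => hXY.notMem_of_mem_left (hgW h).2 hy)
    fun w hw => (hgW hw).1
  refine ⟨f, hf, hfx ▸ hy, fun u hu => ?_⟩
  rcases hfg ▸ mem_range_self u with h | h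
  · exact absurd (f.injective (h.trans hfx.symm)) hu
  · exact (hgW h).2

lemma exists_isSCopy_disjoint [Finite V] [DecidableEq α] (hST : Disjoint S T) {δ c m : ℝ}
    (hm : 0 < m) (hδ : 0 ≤ δ) (hc : c < δ * m)
    (hdens : ∀ X ⊆ S, ∀ Y ⊆ T, m ≤ X.ncard → m ≤ Y.ncard → δ < pairDensity G X Y)
    (hcopy : ∀ W ⊆ S, c ≤ W.ncard → ∃ g : ({y : α | y ≠ x} : Set α) ↪ V,
      IsCopyEmb (H.induce {y : α | y ≠ x}) G g ∧ range g ⊆ W)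
    (U : Set V) (hSU : m ≤ (S \ U).ncard) (hTU : m ≤ (T \ U).ncard) :
    ∃ f, IsSCopy H G x S T f ∧ Disjoint (range f) U := by
  have hTU' : (T \ U).Nonempty := (ncard_pos (toFinite _)).mp (by exact_mod_cast hm.trans_le hTU)
  obtain ⟨f, hf⟩ := exists_isSCopy_of_lt_pairDensity (hST.mono sdiff_subset sdiff_subset) hTU'
    (hdens _ sdiff_subset _ sdiff_subset hSU hTU) (hc.trans_le (by gcongr))
    fun W hW => hcopy W (hW.trans sdiff_subset)
  refine ⟨f, hf.mono sdiff_subset sdiff_subset, disjoint_of_subset_left hf.range_subset ?_⟩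
  rw [← union_sdiff_distrib]
  exact disjoint_sdiff_left

end Copies

section Tiling

variable {H : SimpleGraph α} {G : SimpleGraph V} {x : α} {S T : Set V} {a b : ℕ}

def HasSTTiling (H : SimpleGraph α) (G : SimpleGraph V) (x : α) (S T : Set V) (a b : ℕ) :
    Prop :=
  ∃ FS FT : Finset (α ↪ V), (∀ f ∈ FS, IsSCopy H G x S T f) ∧ (∀ f ∈ FT, IsSCopy H G x T S f) ∧
    (↑FS ∪ ↑FT : Set (α ↪ V)).PairwiseDisjoint (fun f => range f) ∧ FS.card = a ∧
    FT.card = b ∧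
    (tilingCover (↑FS ∪ ↑FT : Set (α ↪ V)) ∩ S).ncard ≤ (Nat.card α - 1) * a + b ∧
    (tilingCover (↑FS ∪ ↑FT : Set (α ↪ V)) ∩ T).ncard ≤ a + (Nat.card α - 1) * b

lemma hasSTTiling_zero : HasSTTiling H G x S T 0 0 :=
  ⟨∅, ∅, by simp, by simp, by simp, rfl, rfl, by simp [tilingCover], by simp [tilingCover]⟩

lemma HasSTTiling.swap (ht : HasSTTiling H G x S T a b) : HasSTTiling H G x T S b a := by
  obtain ⟨FS, FT, hFS, hFT, hdisj, ha, hb, hcS, hcT⟩ := ht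
  refine ⟨FT, FS, hFT, hFS, ?_, hb, ha, ?_, ?_⟩ <;> rw [union_comm]
  · exact hdisj
  · rwa [add_comm]
  · rwa [add_comm]

lemma tilingCover_insert (f : α ↪ V) (F : Set (α ↪ V)) :
    tilingCover (insert f F) = range f ∪ tilingCover F :=
  biUnion_insert _ _ _

lemma HasSTTiling.succ_left [Finite α] [Finite V] {m : ℝ} (hST : Disjoint S T)
    (hstep : ∀ U : Set V, m ≤ (S \ U).ncard → m ≤ (T \ U).ncard →
      ∃ f, IsSCopy H G x S T f ∧ Disjoint (range f) U)
    (ht : HasSTTiling H G x S T a b)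
    (hS : ((Nat.card α - 1 : ℕ) : ℝ) * ↑(a + 1) + b ≤ S.ncard - m)
    (hT : (↑(a + 1) : ℝ) + (Nat.card α - 1 : ℕ) * b ≤ T.ncard - m) :
    HasSTTiling H G x S T (a + 1) b := by
  obtain ⟨FS, FT, hFS, hFT, hdisj, rfl, rfl, hcS, hcT⟩ := ht
  set U := tilingCover (↑FS ∪ ↑FT : Set (α ↪ V))
  have hroom : ∀ {R : Set V} {k : ℕ}, (U ∩ R).ncard ≤ k → (k : ℝ) ≤ R.ncard - m →
      m ≤ (R \ U).ncard := fun {R k} hU hk => by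
    have hR : ((R ∩ U).ncard : ℝ) + (R \ U).ncard = R.ncard := by
      exact_mod_cast ncard_inter_add_ncard_sdiff_eq_ncard R U
    have hU' : ((R ∩ U).ncard : ℝ) ≤ k := by rw [inter_comm]; exact_mod_cast hU
    linarith
  obtain ⟨f, hf, hfU⟩ := hstep U (hroom hcS (by push_cast at hS ⊢; nlinarith))
    (hroom hcT (by push_cast at hT ⊢; linarith))
  have hsub : ∀ g ∈ (↑FS ∪ ↑FT : Set (α ↪ V)), range g ⊆ U := fun g hg =>
    subset_biUnion_of_mem (u := fun g : α ↪ V => range g) hg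
  have hfFS : f ∉ FS := fun h =>
    hfU.notMem_of_mem_left (mem_range_self x) (hsub f (Or.inl h) (mem_range_self x))
  have hcover : tilingCover (↑(FS.cons f hfFS) ∪ ↑FT : Set (α ↪ V)) = range f ∪ U := by
    rw [Finset.coe_cons, insert_union, tilingCover_insert]
  refine ⟨FS.cons f hfFS, FT, Finset.forall_mem_cons _ _ |>.mpr ⟨hf, hFS⟩, hFT, ?_,
    Finset.card_cons hfFS, rfl, ?_, ?_⟩
  · rw [Finset.coe_cons, insert_union]
    exact hdisj.insert fun g hg _ => hfU.mono_right (hsub g hg)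
  · rw [hcover, union_inter_distrib_right]
    calc _ ≤ (range f ∩ S).ncard + (U ∩ S).ncard := ncard_union_le _ _
      _ ≤ (Nat.card α - 1) + ((Nat.card α - 1) * FS.card + FT.card) :=
          add_le_add (hf.ncard_range_inter_left_le hST) hcS
      _ = _ := by ring
  · rw [hcover, union_inter_distrib_right]
    calc _ ≤ (range f ∩ T).ncard + (U ∩ T).ncard := ncard_union_le _ _
      _ ≤ 1 + (FS.card + (Nat.card α - 1) * FT.card) :=
          add_le_add (hf.ncard_range_inter_right_le hST) hcT
      _ = _ := by ring

theorem hasSTTiling_of_forall_exists_disjoint [Finite α] [Finite V] {m : ℝ} (hST : Disjoint S T)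
    (hS : ∀ U : Set V, m ≤ (S \ U).ncard → m ≤ (T \ U).ncard →
      ∃ f, IsSCopy H G x S T f ∧ Disjoint (range f) U)
    (hT : ∀ U : Set V, m ≤ (T \ U).ncard → m ≤ (S \ U).ncard →
      ∃ f, IsSCopy H G x T S f ∧ Disjoint (range f) U)
    (a b : ℕ) (ha : ((Nat.card α - 1 : ℕ) : ℝ) * a + b ≤ S.ncard - m)
    (hb : (a : ℝ) + (Nat.card α - 1 : ℕ) * b ≤ T.ncard - m) :
    HasSTTiling H G x S T a b := by
  have hh : (0 : ℝ) ≤ (Nat.card α - 1 : ℕ) := Nat.cast_nonneg _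
  induction a with
  | zero =>
    induction b with
    | zero => exact hasSTTiling_zero
    | succ b ih =>
      push_cast at ha hb ih
      exact ((ih (by linarith) (by linarith)).swap.succ_left hST.symm hT
        (by push_cast; linarith) (by push_cast; linarith)).swap
  | succ a ih =>
    push_cast at ha hb ih
    exact (ih (by linarith) (by linarith)).succ_left hST hS (by push_cast; linarith)
      (by push_cast; linarith)

end Tiling

theorem statement16_general (hh : ℕ) (H : SimpleGraph (Fin hh)) (x : Fin hh) :
    ∃ d₁' : ℝ, 0 < d₁' ∧ ∀ d₁ : ℝ, 0 < d₁ → d₁ ≤ d₁' →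
    ∃ e₄ : ℝ, 0 < e₄ ∧ ∀ ε₄ : ℝ, 0 < ε₄ → ε₄ ≤ e₄ →
    ∃ e₃ : ℝ, 0 < e₃ ∧ ∀ ε₃ : ℝ, 0 < ε₃ → ε₃ ≤ e₃ →
    ∃ e₂ : ℝ, 0 < e₂ ∧ ∀ ε₂ : ℝ, 0 < ε₂ → ε₂ ≤ e₂ →
    ∃ N₀ : ℕ, ∀ N : ℕ, N₀ ≤ N →
    ∀ (V : Type) [Fintype V], ∀ (Gstar : SimpleGraph V) (S' T' : Set V),
      Disjoint S' T' →
      ε₄ * N ≤ (S'.ncard : ℝ) → (S'.ncard : ℝ) ≤ 2 * N →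
      ε₄ * N ≤ (T'.ncard : ℝ) → (T'.ncard : ℝ) ≤ 2 * N →
      -- density between large subsets of S' and T'
      (∀ X ⊆ S', ∀ Y ⊆ T', 2 * ε₂ * S'.ncard ≤ (X.ncard : ℝ) →
        2 * ε₂ * T'.ncard ≤ (Y.ncard : ℝ) → d₁ / 2 < pairDensity Gstar X Y) →
      -- every large subset of S' (resp. T') spans a copy of H' = H - x
      (∀ W ⊆ S', 2 * ε₃ * N ≤ (W.ncard : ℝ) →
        ∃ g : ({y : Fin hh | y ≠ x} : Set (Fin hh)) ↪ V,
          IsCopyEmb (H.induce {y : Fin hh | y ≠ x}) Gstar g ∧ Set.range (⇑g) ⊆ W) →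
      (∀ W ⊆ T', 2 * ε₃ * N ≤ (W.ncard : ℝ) →
        ∃ g : ({y : Fin hh | y ≠ x} : Set (Fin hh)) ↪ V,
          IsCopyEmb (H.induce {y : Fin hh | y ≠ x}) Gstar g ∧ Set.range (⇑g) ⊆ W) →
      ∀ a b : ℕ,
        ((hh - 1 : ℕ) : ℝ) * a + b ≤ (S'.ncard : ℝ) - ε₄ * N →
        (a : ℝ) + ((hh - 1 : ℕ) : ℝ) * b ≤ (T'.ncard : ℝ) - ε₄ * N →
        ∃ FS FT : Finset (Fin hh ↪ V),
          -- FS consists of S-copies of H, FT of T-copies of H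
          (∀ f ∈ FS, IsCopyEmb H Gstar f ∧ f x ∈ T' ∧ ∀ u : Fin hh, u ≠ x → f u ∈ S') ∧
          (∀ f ∈ FT, IsCopyEmb H Gstar f ∧ f x ∈ S' ∧ ∀ u : Fin hh, u ≠ x → f u ∈ T') ∧
          -- the copies are pairwise vertex-disjoint (an H-tiling)
          (∀ f ∈ FS, ∀ g ∈ FS, f ≠ g → Disjoint (Set.range (⇑f)) (Set.range (⇑g))) ∧
          (∀ f ∈ FT, ∀ g ∈ FT, f ≠ g → Disjoint (Set.range (⇑f)) (Set.range (⇑g))) ∧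
          (∀ f ∈ FS, ∀ g ∈ FT, Disjoint (Set.range (⇑f)) (Set.range (⇑g))) ∧
          FS.card = a ∧ FT.card = b := by
  refine ⟨1, one_pos, fun d₁ hd₁ _ => ⟨1, one_pos, fun ε₄ hε₄ _ =>
    ⟨d₁ * ε₄ / 8, by positivity, fun ε₃ _ hε₃ => ⟨ε₄ / 8, by positivity, fun ε₂ hε₂ hε₂' =>
    ⟨1, fun N hN V _ G S T hST hS₁ hS₂ hT₁ hT₂ hdens hcopyS hcopyT a b ha hb => ?_⟩⟩⟩⟩⟩
  have hN : (1 : ℝ) ≤ N := by exact_mod_cast hN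
  have hm : 0 < ε₄ * N := by positivity
  have hc : 2 * ε₃ * N < d₁ / 2 * (ε₄ * N) := by nlinarith
  -- `ε₂ ≤ ε₄ / 8` makes every set of `ε₄ N` vertices large for the density hypothesis, and
  -- `ε₃ ≤ d₁ ε₄ / 8` lets a vertex of above-average degree into such a set host a copy of `H - x`.
  have hdensST : ∀ X ⊆ S, ∀ Y ⊆ T, ε₄ * N ≤ X.ncard → ε₄ * N ≤ Y.ncard →
      d₁ / 2 < pairDensity G X Y := fun X hX Y hY hXm hYm =>
    hdens X hX Y hY (by nlinarith [mul_le_mul hε₂' hS₂ (by positivity) (by positivity)])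
      (by nlinarith [mul_le_mul hε₂' hT₂ (by positivity) (by positivity)])
  have hdensTS : ∀ Y ⊆ T, ∀ X ⊆ S, ε₄ * N ≤ Y.ncard → ε₄ * N ≤ X.ncard →
      d₁ / 2 < pairDensity G Y X := fun Y hY X hX hYm hXm =>
    pairDensity_comm G X Y ▸ hdensST X hX Y hY hXm hYm
  obtain ⟨FS, FT, hFS, hFT, hdisj, rfl, rfl, -, -⟩ := hasSTTiling_of_forall_exists_disjoint hST
    (exists_isSCopy_disjoint hST hm (by positivity) hc hdensST hcopyS)
    (exists_isSCopy_disjoint hST.symm hm (by positivity) hc hdensTS hcopyT) a b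
    (by simpa using ha) (by simpa using hb)
  exact ⟨FS, FT, hFS, hFT, fun f hf g hg => hdisj (Or.inl hf) (Or.inl hg),
    fun f hf g hg => hdisj (Or.inr hf) (Or.inr hg),
    fun f hf g hg => hdisj (Or.inl hf) (Or.inr hg) ((hFS f hf).ne hST (hFT g hg)), rfl, rfl⟩

/-- Subclaim in the proof of Claim 5.8: in the dense bipartite-type
setting, for all `a, b` with `ha + b ≤ |S'| - ε₄N` and `a + hb ≤ |T'| - ε₄N`,
`G*[S' ∪ T']` contains an `H`-tiling consisting of exactly `a` `S`-copies and exactly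
`b` `T`-copies of `H`. -/
theorem statement16 (hh : ℕ) (hhh : 3 ≤ hh) (H : SimpleGraph (Fin hh)) (x : Fin hh) :
    ∃ d₁' : ℝ, 0 < d₁' ∧ ∀ d₁ : ℝ, 0 < d₁ → d₁ ≤ d₁' →
    ∃ e₄ : ℝ, 0 < e₄ ∧ ∀ ε₄ : ℝ, 0 < ε₄ → ε₄ ≤ e₄ →
    ∃ e₃ : ℝ, 0 < e₃ ∧ ∀ ε₃ : ℝ, 0 < ε₃ → ε₃ ≤ e₃ →
    ∃ e₂ : ℝ, 0 < e₂ ∧ ∀ ε₂ : ℝ, 0 < ε₂ → ε₂ ≤ e₂ →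
    ∃ N₀ : ℕ, ∀ N : ℕ, N₀ ≤ N →
    ∀ (V : Type) [Fintype V], ∀ (Gstar : SimpleGraph V) (S' T' : Set V),
      Disjoint S' T' →
      ε₄ * N ≤ (S'.ncard : ℝ) → (S'.ncard : ℝ) ≤ 2 * N →
      ε₄ * N ≤ (T'.ncard : ℝ) → (T'.ncard : ℝ) ≤ 2 * N →
      -- density between large subsets of S' and T'
      (∀ X ⊆ S', ∀ Y ⊆ T', 2 * ε₂ * S'.ncard ≤ (X.ncard : ℝ) →
        2 * ε₂ * T'.ncard ≤ (Y.ncard : ℝ) → d₁ / 2 < pairDensity Gstar X Y) →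
      -- every large subset of S' (resp. T') spans a copy of H' = H - x
      (∀ W ⊆ S', 2 * ε₃ * N ≤ (W.ncard : ℝ) →
        ∃ g : ({y : Fin hh | y ≠ x} : Set (Fin hh)) ↪ V,
          IsCopyEmb (H.induce {y : Fin hh | y ≠ x}) Gstar g ∧ Set.range (⇑g) ⊆ W) →
      (∀ W ⊆ T', 2 * ε₃ * N ≤ (W.ncard : ℝ) →
        ∃ g : ({y : Fin hh | y ≠ x} : Set (Fin hh)) ↪ V,
          IsCopyEmb (H.induce {y : Fin hh | y ≠ x}) Gstar g ∧ Set.range (⇑g) ⊆ W) →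
      ∀ a b : ℕ,
        ((hh - 1 : ℕ) : ℝ) * a + b ≤ (S'.ncard : ℝ) - ε₄ * N →
        (a : ℝ) + ((hh - 1 : ℕ) : ℝ) * b ≤ (T'.ncard : ℝ) - ε₄ * N →
        ∃ FS FT : Finset (Fin hh ↪ V),
          -- FS consists of S-copies of H, FT of T-copies of H
          (∀ f ∈ FS, IsCopyEmb H Gstar f ∧ f x ∈ T' ∧ ∀ u : Fin hh, u ≠ x → f u ∈ S') ∧
          (∀ f ∈ FT, IsCopyEmb H Gstar f ∧ f x ∈ S' ∧ ∀ u : Fin hh, u ≠ x → f u ∈ T') ∧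
          -- the copies are pairwise vertex-disjoint (an H-tiling)
          (∀ f ∈ FS, ∀ g ∈ FS, f ≠ g → Disjoint (Set.range (⇑f)) (Set.range (⇑g))) ∧
          (∀ f ∈ FT, ∀ g ∈ FT, f ≠ g → Disjoint (Set.range (⇑f)) (Set.range (⇑g))) ∧
          (∀ f ∈ FS, ∀ g ∈ FT, Disjoint (Set.range (⇑f)) (Set.range (⇑g))) ∧
          FS.card = a ∧ FT.card = b :=
  statement16_general hh H x
end
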